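/- Let P, Q ∈ B_A(H) with APQ^{♯_A} = 0. Then (1/2)max{‖P+Q‖_A, ‖P−Q‖_A} ≤ ω_𝔸([[P,Q],[0,0]]) ≤ min{‖P+Q‖_A, ‖P−Q‖_A}. -/

import Mathlib

/-!
Write `A = (√A)²`, so that `‖x‖_A = ‖√A x‖` and `⟪A x, y⟫` obeys Cauchy–Schwarz for `‖·‖_A`.
An operator `S` with an `A`-adjoint `S'` is `A`-bounded: `G = S'S` is `A`-selfadjoint, and the
doubling inequality `‖G^m x‖_A² ≤ ‖G^{2m} x‖_A ‖x‖_A` pits the growth `‖G‖^k` of `‖G^k x‖_A`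
against log-convexity, forcing `‖G x‖_A ≤ ‖G‖ ‖x‖_A`; consequently `‖S‖_A = ‖S'‖_A`.
For `𝕋 = [[P, Q], [0, 0]]` the operator `[[P^♯, 0], [Q^♯, 0]]` is an `𝔸`-adjoint, and
`A P Q^♯ = 0` makes `P^♯ x` and `Q^♯ x` `A`-orthogonal, so
`‖𝕋‖_𝔸 = ‖[[P^♯, 0], [Q^♯, 0]]‖_𝔸 = ‖P^♯ ± Q^♯‖_A = ‖P ± Q‖_A`.
The claim is then `ω_𝔸(𝕋) ≤ ‖𝕋‖_𝔸 ≤ 2 ω_𝔸(𝕋)`.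
-/

open ContinuousLinearMap

/-- The `A`-seminorm of a vector: `‖x‖_A = √⟨Ax, x⟩`. -/
noncomputable def vnormA {H : Type*} [NormedAddCommGroup H] [InnerProductSpace ℂ H]
    (A : H →L[ℂ] H) (x : H) : ℝ :=
  Real.sqrt (RCLike.re (inner ℂ (A x) x : ℂ))

/-- `T` is `A`-bounded, i.e. `T ∈ B_{A^{1/2}}(H)`. -/
def ABounded {H : Type*} [NormedAddCommGroup H] [InnerProductSpace ℂ H]
    (A T : H →L[ℂ] H) : Prop :=
  ∃ c : ℝ, 0 < c ∧ ∀ x, vnormA A (T x) ≤ c * vnormA A x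

/-- The `A`-operator seminorm `‖T‖_A = sup{‖Tx‖_A : ‖x‖_A = 1}`. -/
noncomputable def opNormA {H : Type*} [NormedAddCommGroup H] [InnerProductSpace ℂ H]
    (A T : H →L[ℂ] H) : ℝ :=
  sSup {c : ℝ | ∃ x : H, vnormA A x = 1 ∧ c = vnormA A (T x)}

/-- The `A`-numerical radius `ω_A(T) = sup{|⟨ATx, x⟩| : ‖x‖_A = 1}`. -/
noncomputable def wA {H : Type*} [NormedAddCommGroup H] [InnerProductSpace ℂ H]
    (A T : H →L[ℂ] H) : ℝ :=
  sSup {c : ℝ | ∃ x : H, vnormA A x = 1 ∧ c = ‖(inner ℂ (A (T x)) x : ℂ)‖}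

/-- `Ts` is the reduced (Douglas) solution of `AX = T*A`, i.e. `Ts = T^{♯_A}`. -/
def IsReducedAdjoint {H : Type*} [NormedAddCommGroup H] [InnerProductSpace ℂ H]
    [CompleteSpace H] (A T Ts : H →L[ℂ] H) : Prop :=
  A ∘L Ts = (ContinuousLinearMap.adjoint T) ∘L A ∧
    ∀ y, Ts y ∈ closure (Set.range A)

/-- The `2 × 2` operator matrix `[[P, Q], [R, S]]` acting on `H ⊕ H` (with the `ℓ²` product
inner product). -/
noncomputable def blk {H : Type*} [NormedAddCommGroup H] [InnerProductSpace ℂ H]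
    (P Q R S : H →L[ℂ] H) : WithLp 2 (H × H) →L[ℂ] WithLp 2 (H × H) :=
  letI e := (WithLp.prodContinuousLinearEquiv 2 ℂ H H)
  (e.symm.toContinuousLinearMap) ∘L
    ((P.comp (fst ℂ H H) + Q.comp (snd ℂ H H)).prod
      (R.comp (fst ℂ H H) + S.comp (snd ℂ H H))) ∘L
    (e.toContinuousLinearMap)

/-- `𝔸 = diag(A, A)` on `H ⊕ H`. -/
noncomputable def AA {H : Type*} [NormedAddCommGroup H] [InnerProductSpace ℂ H]
    (A : H →L[ℂ] H) : WithLp 2 (H × H) →L[ℂ] WithLp 2 (H × H) :=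
  blk A 0 0 A

open scoped InnerProductSpace

section Seminorm

variable {K : Type*} [NormedAddCommGroup K] [InnerProductSpace ℂ K] {A T : K →L[ℂ] K}

theorem vnormA_nonneg (A : K →L[ℂ] K) (x : K) : 0 ≤ vnormA A x := Real.sqrt_nonneg _

theorem vnormA_smul (A : K →L[ℂ] K) (c : ℂ) (x : K) :
    vnormA A (c • x) = ‖c‖ * vnormA A x := by
  have h : RCLike.re ⟪A (c • x), c • x⟫_ℂ = ‖c‖ ^ 2 * RCLike.re ⟪A x, x⟫_ℂ := by
    rw [map_smul, inner_smul_left, inner_smul_right, ← mul_assoc, RCLike.conj_mul]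
    norm_cast
    exact RCLike.re_ofReal_mul _ _
  rw [vnormA, vnormA, h, Real.sqrt_mul (by positivity), Real.sqrt_sq (norm_nonneg c)]

theorem vnormA_le (A : K →L[ℂ] K) (x : K) : vnormA A x ≤ √‖A‖ * ‖x‖ := by
  rw [vnormA, ← Real.sqrt_sq (norm_nonneg x), ← Real.sqrt_mul (norm_nonneg A)]
  refine Real.sqrt_le_sqrt ?_
  calc RCLike.re ⟪A x, x⟫_ℂ ≤ ‖⟪A x, x⟫_ℂ‖ := RCLike.re_le_norm _
    _ ≤ ‖A x‖ * ‖x‖ := norm_inner_le_norm _ _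
    _ ≤ ‖A‖ * ‖x‖ * ‖x‖ := by gcongr; exact A.le_opNorm x
    _ = ‖A‖ * ‖x‖ ^ 2 := by ring

theorem vnormA_inv_smul_self {x : K} (hx : vnormA A x ≠ 0) :
    vnormA A ((vnormA A x : ℂ)⁻¹ • x) = 1 := by
  rw [vnormA_smul, norm_inv, Complex.norm_real, Real.norm_of_nonneg (vnormA_nonneg A x),
    inv_mul_cancel₀ hx]

theorem opNormA_nonneg (A T : K →L[ℂ] K) : 0 ≤ opNormA A T :=
  Real.sSup_nonneg (by rintro _ ⟨x, -, rfl⟩; exact vnormA_nonneg A (T x))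

theorem wA_nonneg (A T : K →L[ℂ] K) : 0 ≤ wA A T :=
  Real.sSup_nonneg (by rintro _ ⟨x, -, rfl⟩; exact norm_nonneg _)

theorem opNormA_le_of_forall {M : ℝ} (hM : 0 ≤ M)
    (h : ∀ x, vnormA A x = 1 → vnormA A (T x) ≤ M) : opNormA A T ≤ M :=
  Real.sSup_le (by rintro _ ⟨x, hx, rfl⟩; exact h x hx) hM

theorem wA_le_of_forall {M : ℝ} (hM : 0 ≤ M)
    (h : ∀ x, vnormA A x = 1 → ‖⟪A (T x), x⟫_ℂ‖ ≤ M) : wA A T ≤ M :=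
  Real.sSup_le (by rintro _ ⟨x, hx, rfl⟩; exact h x hx) hM

theorem ABounded.vnormA_apply_le (hT : ABounded A T) (x : K) :
    vnormA A (T x) ≤ opNormA A T * vnormA A x := by
  obtain ⟨c, -, hc⟩ := hT
  by_cases hx : vnormA A x = 0
  · simpa [hx] using hc x
  have hbdd : BddAbove {c' | ∃ x, vnormA A x = 1 ∧ c' = vnormA A (T x)} := by
    refine ⟨c, ?_⟩
    rintro _ ⟨y, hy, rfl⟩
    simpa [hy] using hc y
  have hle := le_csSup hbdd ⟨_, vnormA_inv_smul_self hx, rfl⟩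
  rw [map_smul, vnormA_smul, norm_inv, Complex.norm_real,
    Real.norm_of_nonneg (vnormA_nonneg A x),
    inv_mul_le_iff₀ (lt_of_le_of_ne (vnormA_nonneg A x) (Ne.symm hx))] at hle
  rw [mul_comm]
  exact hle

theorem norm_pow_apply_le (G : K →L[ℂ] K) (k : ℕ) (x : K) : ‖(G ^ k) x‖ ≤ ‖G‖ ^ k * ‖x‖ := by
  induction k with
  | zero => simp
  | succ k ih =>
    calc ‖(G ^ (k + 1)) x‖ = ‖G ((G ^ k) x)‖ := by rw [pow_succ', mul_apply_eq_comp]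
      _ ≤ ‖G‖ * ‖(G ^ k) x‖ := G.le_opNorm _
      _ ≤ ‖G‖ * (‖G‖ ^ k * ‖x‖) := by gcongr
      _ = ‖G‖ ^ (k + 1) * ‖x‖ := by ring

end Seminorm

section Positive

variable {K : Type*} [NormedAddCommGroup K] [InnerProductSpace ℂ K] [CompleteSpace K]
  {A T : K →L[ℂ] K}

theorem inner_apply_eq_inner_sqrt (hA : A.IsPositive) (x y : K) :
    ⟪A x, y⟫_ℂ = ⟪CFC.sqrt A x, CFC.sqrt A y⟫_ℂ := by
  have hA0 : 0 ≤ A := (ContinuousLinearMap.nonneg_iff_isPositive A).mpr hA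
  have hsqrt : IsSelfAdjoint (CFC.sqrt A) := (CFC.sqrt_nonneg A).isSelfAdjoint
  conv_lhs => rw [← CFC.sqrt_mul_sqrt_self A hA0]
  exact hsqrt.isSymmetric _ _

theorem vnormA_eq_norm_sqrt (hA : A.IsPositive) (x : K) : vnormA A x = ‖CFC.sqrt A x‖ := by
  rw [vnormA, inner_apply_eq_inner_sqrt hA, inner_self_eq_norm_sq, Real.sqrt_sq (norm_nonneg _)]

theorem vnormA_sq (hA : A.IsPositive) (x : K) : vnormA A x ^ 2 = RCLike.re ⟪A x, x⟫_ℂ := by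
  rw [inner_apply_eq_inner_sqrt hA, inner_self_eq_norm_sq, vnormA_eq_norm_sqrt hA]

theorem norm_inner_self_eq_vnormA_sq (hA : A.IsPositive) (x : K) :
    ‖⟪A x, x⟫_ℂ‖ = vnormA A x ^ 2 := by
  rw [inner_apply_eq_inner_sqrt hA, inner_self_eq_norm_sq_to_K, vnormA_eq_norm_sqrt hA]
  norm_cast
  exact Real.norm_of_nonneg (sq_nonneg _)

theorem norm_inner_le_vnormA_mul (hA : A.IsPositive) (x y : K) :
    ‖⟪A x, y⟫_ℂ‖ ≤ vnormA A x * vnormA A y := by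
  rw [inner_apply_eq_inner_sqrt hA, vnormA_eq_norm_sqrt hA, vnormA_eq_norm_sqrt hA]
  exact norm_inner_le_norm _ _

theorem vnormA_add_sq_add_vnormA_sub_sq (hA : A.IsPositive) (x y : K) :
    vnormA A (x + y) ^ 2 + vnormA A (x - y) ^ 2 = 2 * (vnormA A x ^ 2 + vnormA A y ^ 2) := by
  simp only [vnormA_eq_norm_sqrt hA, map_add, map_sub]
  exact parallelogram_law_with_norm ℂ _ _

theorem vnormA_add_sq_eq_of_re_inner_eq_zero (hA : A.IsPositive) {x y : K}
    (hxy : RCLike.re ⟪A x, y⟫_ℂ = 0) :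
    vnormA A (x + y) ^ 2 = vnormA A x ^ 2 + vnormA A y ^ 2 := by
  rw [inner_apply_eq_inner_sqrt hA] at hxy
  simp only [vnormA_eq_norm_sqrt hA, map_add, @norm_add_sq ℂ, hxy]
  ring

theorem vnormA_sub_sq_eq_of_re_inner_eq_zero (hA : A.IsPositive) {x y : K}
    (hxy : RCLike.re ⟪A x, y⟫_ℂ = 0) :
    vnormA A (x - y) ^ 2 = vnormA A x ^ 2 + vnormA A y ^ 2 := by
  rw [inner_apply_eq_inner_sqrt hA] at hxy
  simp only [vnormA_eq_norm_sqrt hA, map_sub, @norm_sub_sq ℂ, hxy]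
  ring

theorem ABounded.norm_inner_le_wA (hA : A.IsPositive) (hT : ABounded A T) (x : K) :
    ‖⟪A (T x), x⟫_ℂ‖ ≤ wA A T * vnormA A x ^ 2 := by
  by_cases hx : vnormA A x = 0
  · simpa [hx] using norm_inner_le_vnormA_mul hA (T x) x
  have hbdd : BddAbove {c | ∃ x, vnormA A x = 1 ∧ c = ‖⟪A (T x), x⟫_ℂ‖} := by
    refine ⟨opNormA A T, ?_⟩
    rintro _ ⟨y, hy, rfl⟩
    simpa [hy] using (norm_inner_le_vnormA_mul hA (T y) y).trans
      (mul_le_mul_of_nonneg_right (hT.vnormA_apply_le y) (vnormA_nonneg A y))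
  have hle := le_csSup hbdd ⟨_, vnormA_inv_smul_self hx, rfl⟩
  rw [map_smul, map_smul, inner_smul_left, inner_smul_right, norm_mul, norm_mul,
    RCLike.norm_conj, norm_inv, Complex.norm_real, Real.norm_of_nonneg (vnormA_nonneg A x),
    ← mul_assoc, ← sq, inv_pow, inv_mul_le_iff₀ (by positivity)] at hle
  rw [mul_comm]
  exact hle

theorem wA_le_opNormA (hA : A.IsPositive) (hT : ABounded A T) : wA A T ≤ opNormA A T :=
  wA_le_of_forall (opNormA_nonneg A T) fun x hx => by
    simpa [hx] using (norm_inner_le_vnormA_mul hA (T x) x).trans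
      (mul_le_mul_of_nonneg_right (hT.vnormA_apply_le x) (vnormA_nonneg A x))

theorem ABounded.norm_inner_le_wA_mul_add (hA : A.IsPositive) (hT : ABounded A T) (x y : K) :
    ‖⟪A (T y), x⟫_ℂ‖ ≤ wA A T * (vnormA A x ^ 2 + vnormA A y ^ 2) := by
  have hpol := inner_map_polarization (A ∘L T : K →L[ℂ] K).toLinearMap x y
  simp only [ContinuousLinearMap.coe_coe, ContinuousLinearMap.comp_apply] at hpol
  have hw := hT.norm_inner_le_wA hA
  have hI := vnormA_add_sq_add_vnormA_sub_sq hA x (Complex.I • y)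
  rw [vnormA_smul, Complex.norm_I, one_mul] at hI
  rw [hpol, norm_div, Complex.norm_ofNat, div_le_iff₀ (by norm_num)]
  calc _ ≤ ‖⟪A (T (x + y)), x + y⟫_ℂ‖ + ‖⟪A (T (x - y)), x - y⟫_ℂ‖
        + ‖⟪A (T (x + Complex.I • y)), x + Complex.I • y⟫_ℂ‖
        + ‖⟪A (T (x - Complex.I • y)), x - Complex.I • y⟫_ℂ‖ := by
        refine (norm_sub_le _ _).trans ?_
        gcongr
        · refine (norm_add_le _ _).trans ?_
          gcongr
          · exact norm_sub_le _ _
          · rw [norm_mul, Complex.norm_I, one_mul]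
        · rw [norm_mul, Complex.norm_I, one_mul]
    _ ≤ wA A T * (vnormA A (x + y) ^ 2 + vnormA A (x - y) ^ 2
        + (vnormA A (x + Complex.I • y) ^ 2 + vnormA A (x - Complex.I • y) ^ 2)) := by
        nlinarith [hw (x + y), hw (x - y), hw (x + Complex.I • y), hw (x - Complex.I • y)]
    _ = _ := by rw [vnormA_add_sq_add_vnormA_sub_sq hA, hI]; ring

theorem opNormA_le_two_mul_wA (hA : A.IsPositive) (hT : ABounded A T) :
    opNormA A T ≤ 2 * wA A T := by
  refine opNormA_le_of_forall (by linarith [wA_nonneg A T]) fun x hx => ?_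
  by_cases hTx : vnormA A (T x) = 0
  · linarith [wA_nonneg A T]
  have h := hT.norm_inner_le_wA_mul_add hA ((vnormA A (T x) : ℂ)⁻¹ • T x) x
  rw [vnormA_inv_smul_self hTx, hx, inner_smul_right, norm_mul, norm_inv, Complex.norm_real,
    Real.norm_of_nonneg (vnormA_nonneg A _), norm_inner_self_eq_vnormA_sq hA, sq,
    inv_mul_cancel_left₀ hTx] at h
  linarith

end Positive

theorem le_of_forall_pow_two_pow_le_mul {a b C : ℝ} (hb : 0 ≤ b)
    (h : ∀ n : ℕ, a ^ 2 ^ n ≤ C * b ^ 2 ^ n) : a ≤ b := by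
  by_contra! hba
  have ha0 : 0 < a := hb.trans_lt hba
  have hC : 0 < C := by
    by_contra! hC
    have h0 := h 0
    simp only [pow_zero, pow_one] at h0
    nlinarith
  obtain ⟨n, hn⟩ := exists_pow_lt_of_lt_one (inv_pos.mpr hC) ((div_lt_one ha0).mpr hba)
  have hr0 : 0 ≤ b / a := div_nonneg hb ha0.le
  have hr1 : b / a ≤ 1 := (div_le_one ha0).mpr hba.le
  have hpow : (b / a) ^ 2 ^ n ≤ (b / a) ^ n :=
    pow_le_pow_of_le_one hr0 hr1 Nat.lt_two_pow_self.le
  have hlt : C * (b / a) ^ 2 ^ n < 1 := by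
    calc C * (b / a) ^ 2 ^ n ≤ C * (b / a) ^ n := by gcongr
      _ < C * C⁻¹ := by gcongr
      _ = 1 := mul_inv_cancel₀ hC.ne'
  rw [div_pow, mul_div_assoc', div_lt_one (by positivity)] at hlt
  linarith [h n]

theorem le_mul_of_sq_le_mul {a : ℕ → ℝ} {C q : ℝ} (ha : ∀ k, 0 ≤ a k) (hq : 0 ≤ q)
    (hsq : ∀ m, a m ^ 2 ≤ a (m + m) * a 0) (hgrowth : ∀ k, a k ≤ C * q ^ k) :
    a 1 ≤ q * a 0 := by
  rcases (ha 0).eq_or_lt with h0 | h0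
  · have h1 := hsq 1
    rw [← h0, mul_zero] at h1
    rw [← h0, mul_zero, ← sq_eq_zero_iff.mp (le_antisymm h1 (sq_nonneg _))]
  have hdouble : ∀ n : ℕ, a 1 ^ 2 ^ n * a 0 ≤ a (2 ^ n) * a 0 ^ 2 ^ n := by
    intro n
    induction n with
    | zero => simp [mul_comm]
    | succ n ih =>
      have hsq' := hsq (2 ^ n)
      rw [← two_mul, ← pow_succ'] at hsq'
      have key : (a 1 ^ 2 ^ (n + 1) * a 0) * a 0 ≤ (a (2 ^ (n + 1)) * a 0 ^ 2 ^ (n + 1)) * a 0 :=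
        calc (a 1 ^ 2 ^ (n + 1) * a 0) * a 0 = (a 1 ^ 2 ^ n * a 0) ^ 2 := by ring
          _ ≤ (a (2 ^ n) * a 0 ^ 2 ^ n) ^ 2 := by
              gcongr
              exact mul_nonneg (pow_nonneg (ha 1) _) (ha 0)
          _ = a (2 ^ n) ^ 2 * a 0 ^ 2 ^ (n + 1) := by ring
          _ ≤ a (2 ^ (n + 1)) * a 0 * a 0 ^ 2 ^ (n + 1) := by gcongr
          _ = (a (2 ^ (n + 1)) * a 0 ^ 2 ^ (n + 1)) * a 0 := by ring
      exact le_of_mul_le_mul_right key h0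
  refine le_of_forall_pow_two_pow_le_mul (mul_nonneg hq (ha 0)) (C := C / a 0) fun n => ?_
  rw [div_mul_eq_mul_div, le_div_iff₀ h0]
  calc a 1 ^ 2 ^ n * a 0 ≤ a (2 ^ n) * a 0 ^ 2 ^ n := hdouble n
    _ ≤ C * q ^ 2 ^ n * a 0 ^ 2 ^ n := by gcongr; exact hgrowth _
    _ = C * (q * a 0) ^ 2 ^ n := by ring

section AAdjoint

variable {K : Type*} [NormedAddCommGroup K] [InnerProductSpace ℂ K] [CompleteSpace K]
  {A S S' G : K →L[ℂ] K}

theorem comp_eq_adjoint_comp_symm (hA : IsSelfAdjoint A) (h : A ∘L S' = adjoint S ∘L A) :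
    A ∘L S = adjoint S' ∘L A := by
  have h' := congrArg adjoint h
  rw [adjoint_comp, adjoint_comp, adjoint_adjoint, hA.adjoint_eq] at h'
  exact h'.symm

theorem inner_apply_comp_eq_inner (hA : IsSelfAdjoint A) (h : A ∘L S' = adjoint S ∘L A)
    (x y : K) : ⟪A (S x), y⟫_ℂ = ⟪A x, S' y⟫_ℂ := by
  have hy : A (S' y) = adjoint S (A y) := congrArg (fun F : K →L[ℂ] K => F y) h
  calc ⟪A (S x), y⟫_ℂ = ⟪S x, A y⟫_ℂ := hA.isSymmetric (S x) y
    _ = ⟪x, A (S' y)⟫_ℂ := by rw [hy, adjoint_inner_right]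
    _ = ⟪A x, S' y⟫_ℂ := (hA.isSymmetric x (S' y)).symm

theorem inner_apply_pow_eq_inner (hA : IsSelfAdjoint A) (hG : A ∘L G = adjoint G ∘L A)
    (k : ℕ) (x y : K) : ⟪A ((G ^ k) x), y⟫_ℂ = ⟪A x, (G ^ k) y⟫_ℂ := by
  induction k generalizing x with
  | zero => simp
  | succ k ih =>
    calc ⟪A ((G ^ (k + 1)) x), y⟫_ℂ = ⟪A ((G ^ k) (G x)), y⟫_ℂ := by
          rw [pow_succ, mul_apply_eq_comp]
      _ = ⟪A x, G ((G ^ k) y)⟫_ℂ := by rw [ih, inner_apply_comp_eq_inner hA hG]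
      _ = ⟪A x, (G ^ (k + 1)) y⟫_ℂ := by rw [pow_succ', mul_apply_eq_comp]

theorem vnormA_apply_le_of_comp_eq_adjoint_comp_self (hA : A.IsPositive)
    (hG : A ∘L G = adjoint G ∘L A) (x : K) : vnormA A (G x) ≤ ‖G‖ * vnormA A x := by
  have hsq : ∀ m, vnormA A ((G ^ m) x) ^ 2 ≤ vnormA A ((G ^ (m + m)) x) * vnormA A x := by
    intro m
    rw [← norm_inner_self_eq_vnormA_sq hA, ← inner_apply_pow_eq_inner hA.isSelfAdjoint hG,
      ← mul_apply_eq_comp (G ^ m), ← pow_add]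
    exact norm_inner_le_vnormA_mul hA _ _
  have hgrowth : ∀ k, vnormA A ((G ^ k) x) ≤ (√‖A‖ * ‖x‖) * ‖G‖ ^ k := fun k =>
    calc vnormA A ((G ^ k) x) ≤ √‖A‖ * ‖(G ^ k) x‖ := vnormA_le A _
      _ ≤ √‖A‖ * (‖G‖ ^ k * ‖x‖) := by gcongr; exact norm_pow_apply_le G k x
      _ = (√‖A‖ * ‖x‖) * ‖G‖ ^ k := by ring
  simpa using le_mul_of_sq_le_mul (fun k => vnormA_nonneg A _) (norm_nonneg G) hsq hgrowth

theorem vnormA_apply_sq_le (hA : A.IsPositive) (h : A ∘L S' = adjoint S ∘L A) (x : K) :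
    vnormA A (S x) ^ 2 ≤ vnormA A x * vnormA A (S' (S x)) := by
  rw [← norm_inner_self_eq_vnormA_sq hA, inner_apply_comp_eq_inner hA.isSelfAdjoint h]
  exact norm_inner_le_vnormA_mul hA _ _

theorem aBounded_of_comp_eq_adjoint_comp (hA : A.IsPositive) (h : A ∘L S' = adjoint S ∘L A) :
    ABounded A S := by
  have hG : A ∘L (S' ∘L S) = adjoint (S' ∘L S) ∘L A := by
    rw [← comp_assoc, h, comp_assoc, comp_eq_adjoint_comp_symm hA.isSelfAdjoint h, adjoint_comp,
      comp_assoc]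
  refine ⟨√‖S' ∘L S‖ + 1, add_pos_of_nonneg_of_pos (Real.sqrt_nonneg _) one_pos, fun x => ?_⟩
  have hsq : vnormA A (S x) ^ 2 ≤ (√‖S' ∘L S‖ * vnormA A x) ^ 2 := by
    rw [mul_pow, Real.sq_sqrt (norm_nonneg _)]
    calc vnormA A (S x) ^ 2 ≤ vnormA A x * vnormA A (S' (S x)) := vnormA_apply_sq_le hA h x
      _ ≤ vnormA A x * (‖S' ∘L S‖ * vnormA A x) := by
          gcongr
          · exact vnormA_nonneg A x
          · exact vnormA_apply_le_of_comp_eq_adjoint_comp_self hA hG x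
      _ = ‖S' ∘L S‖ * vnormA A x ^ 2 := by ring
  rw [pow_le_pow_iff_left₀ (vnormA_nonneg A _) (mul_nonneg (Real.sqrt_nonneg _)
    (vnormA_nonneg A x)) two_ne_zero] at hsq
  linarith [vnormA_nonneg A x]

theorem opNormA_le_of_comp_eq_adjoint_comp (hA : A.IsPositive)
    (h : A ∘L S' = adjoint S ∘L A) : opNormA A S ≤ opNormA A S' := by
  have hS' : ABounded A S' :=
    aBounded_of_comp_eq_adjoint_comp hA (comp_eq_adjoint_comp_symm hA.isSelfAdjoint h)
  refine opNormA_le_of_forall (opNormA_nonneg A S') fun x hx => ?_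
  have h1 := vnormA_apply_sq_le hA h x
  rw [hx, one_mul] at h1
  nlinarith [hS'.vnormA_apply_le (S x), vnormA_nonneg A (S x), opNormA_nonneg A S']

theorem opNormA_eq_of_comp_eq_adjoint_comp (hA : A.IsPositive)
    (h : A ∘L S' = adjoint S ∘L A) : opNormA A S = opNormA A S' :=
  (opNormA_le_of_comp_eq_adjoint_comp hA h).antisymm
    (opNormA_le_of_comp_eq_adjoint_comp hA (comp_eq_adjoint_comp_symm hA.isSelfAdjoint h))

end AAdjoint

section Block

open scoped ComplexOrder

variable {H : Type*} [NormedAddCommGroup H] [InnerProductSpace ℂ H]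

theorem blk_apply (P Q R S : H →L[ℂ] H) (ξ : WithLp 2 (H × H)) :
    blk P Q R S ξ = WithLp.toLp 2 (P ξ.fst + Q ξ.snd, R ξ.fst + S ξ.snd) := rfl

variable [CompleteSpace H] {A : H →L[ℂ] H}

theorem adjoint_blk (P Q R S : H →L[ℂ] H) :
    adjoint (blk P Q R S) = blk (adjoint P) (adjoint R) (adjoint Q) (adjoint S) := by
  refine ((eq_adjoint_iff _ _).mpr fun ξ η => ?_).symm
  simp only [blk_apply, WithLp.prod_inner_apply, WithLp.ofLp_fst, WithLp.ofLp_snd,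
    inner_add_left, inner_add_right, adjoint_inner_left]
  ring

theorem isPositive_AA (hA : A.IsPositive) : (AA A).IsPositive := by
  refine (isPositive_iff' _).mpr ⟨?_, fun ξ => ?_⟩
  · rw [IsSelfAdjoint, star_eq_adjoint, AA, adjoint_blk, hA.isSelfAdjoint.adjoint_eq, map_zero]
  · simp only [AA, blk_apply, WithLp.prod_inner_apply, zero_apply, add_zero, zero_add]
    exact add_nonneg (hA.inner_nonneg_left _) (hA.inner_nonneg_left _)

theorem vnormA_AA_sq (hA : A.IsPositive) (ξ : WithLp 2 (H × H)) :
    vnormA (AA A) ξ ^ 2 = vnormA A ξ.fst ^ 2 + vnormA A ξ.snd ^ 2 := by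
  rw [vnormA_sq (isPositive_AA hA), vnormA_sq hA, vnormA_sq hA]
  simp [AA, blk_apply, WithLp.prod_inner_apply]

theorem AA_comp_blk_eq_adjoint_comp {P Q R S P' Q' R' S' : H →L[ℂ] H}
    (hP : A ∘L P' = adjoint P ∘L A) (hQ : A ∘L Q' = adjoint Q ∘L A)
    (hR : A ∘L R' = adjoint R ∘L A) (hS : A ∘L S' = adjoint S ∘L A) :
    AA A ∘L blk P' R' Q' S' = adjoint (blk P Q R S) ∘L AA A := by
  have pointwise {X Y : H →L[ℂ] H} (h : A ∘L Y = adjoint X ∘L A) (x : H) :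
      A (Y x) = adjoint X (A x) := DFunLike.congr_fun h x
  ext ξ
  simp [adjoint_blk, AA, blk_apply, pointwise hP, pointwise hQ, pointwise hR,
    pointwise hS]

theorem opNormA_AA_blk_eq {R S T : H →L[ℂ] H} (hA : A.IsPositive) (hR : ABounded A R)
    (h : ∀ x, vnormA A (R x) ^ 2 = vnormA A (S x) ^ 2 + vnormA A (T x) ^ 2) :
    opNormA (AA A) (blk S 0 T 0) = opNormA A R := by
  have hcol (ξ : WithLp 2 (H × H)) : vnormA (AA A) (blk S 0 T 0 ξ) = vnormA A (R ξ.fst) := by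
    rw [← sq_eq_sq₀ (vnormA_nonneg _ _) (vnormA_nonneg _ _), vnormA_AA_sq hA, h]
    simp [blk_apply]
  have hfst (ξ : WithLp 2 (H × H)) : vnormA A ξ.fst ≤ vnormA (AA A) ξ := by
    rw [← pow_le_pow_iff_left₀ (vnormA_nonneg _ _) (vnormA_nonneg _ _) two_ne_zero,
      vnormA_AA_sq hA]
    exact le_add_of_nonneg_right (sq_nonneg _)
  have hblk : ABounded (AA A) (blk S 0 T 0) := by
    obtain ⟨c, hc, hRc⟩ := hR
    exact ⟨c, hc, fun ξ => hcol ξ ▸ (hRc _).trans (mul_le_mul_of_nonneg_left (hfst ξ) hc.le)⟩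
  refine le_antisymm (opNormA_le_of_forall (opNormA_nonneg A R) fun ξ hξ => ?_)
    (opNormA_le_of_forall (opNormA_nonneg _ _) fun x hx => ?_)
  · rw [hcol]
    calc vnormA A (R ξ.fst) ≤ opNormA A R * vnormA A ξ.fst := hR.vnormA_apply_le _
      _ ≤ opNormA A R * 1 := by
          gcongr
          · exact opNormA_nonneg A R
          · exact hξ ▸ hfst ξ
      _ = opNormA A R := mul_one _
  · have hx0 : vnormA (AA A) (WithLp.toLp 2 (x, 0)) = 1 := by
      rw [← sq_eq_sq₀ (vnormA_nonneg _ _) zero_le_one, vnormA_AA_sq hA]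
      have h0 : vnormA A 0 = 0 := by simp [vnormA]
      simp [hx, h0]
    simpa [hcol, hx0] using hblk.vnormA_apply_le (WithLp.toLp 2 (x, 0))

end Block

theorem opNormA_eq_opNormA_AA_blk {H : Type*} [NormedAddCommGroup H] [InnerProductSpace ℂ H]
    [CompleteSpace H] {A P Q Ps Qs R Rs : H →L[ℂ] H} (hA : A.IsPositive)
    (hblk : AA A ∘L blk Ps 0 Qs 0 = adjoint (blk P Q 0 0) ∘L AA A)
    (hR : A ∘L Rs = adjoint R ∘L A)
    (hRs : ∀ x, vnormA A (Rs x) ^ 2 = vnormA A (Ps x) ^ 2 + vnormA A (Qs x) ^ 2) :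
    opNormA A R = opNormA (AA A) (blk P Q 0 0) := by
  have hRs_bdd : ABounded A Rs :=
    aBounded_of_comp_eq_adjoint_comp hA (comp_eq_adjoint_comp_symm hA.isSelfAdjoint hR)
  rw [opNormA_eq_of_comp_eq_adjoint_comp hA hR, ← opNormA_AA_blk_eq hA hRs_bdd hRs,
    opNormA_eq_of_comp_eq_adjoint_comp (isPositive_AA hA) hblk]

theorem stmt18 {H : Type*} [NormedAddCommGroup H] [InnerProductSpace ℂ H] [CompleteSpace H]
    (A : H →L[ℂ] H) (hA : A.IsPositive)
    (P Q Qs : H →L[ℂ] H) (hP : ∃ Ps, IsReducedAdjoint A P Ps)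
    (hQ : IsReducedAdjoint A Q Qs) (h0 : A ∘L (P ∘L Qs) = 0) :
    (1 / 2) * max (opNormA A (P + Q)) (opNormA A (P - Q)) ≤
        wA (AA A) (blk P Q 0 0) ∧
      wA (AA A) (blk P Q 0 0) ≤ min (opNormA A (P + Q)) (opNormA A (P - Q)) := by
  obtain ⟨Ps, hPs, -⟩ := hP
  have hQs := hQ.1
  have hAsa := hA.isSelfAdjoint
  have hblk : AA A ∘L blk Ps 0 Qs 0 = adjoint (blk P Q 0 0) ∘L AA A :=
    AA_comp_blk_eq_adjoint_comp hPs hQs (by simp) (by simp)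
  have horth (x : H) : RCLike.re ⟪A (Ps x), Qs x⟫_ℂ = 0 := by
    have hPQs : A (P (Qs x)) = 0 := by simpa using DFunLike.congr_fun h0 x
    rw [inner_apply_comp_eq_inner hAsa (comp_eq_adjoint_comp_symm hAsa hPs),
      show ⟪A x, P (Qs x)⟫_ℂ = ⟪x, A (P (Qs x))⟫_ℂ from hAsa.isSymmetric _ _, hPQs,
      inner_zero_right, map_zero]
  have hadd : opNormA A (P + Q) = opNormA (AA A) (blk P Q 0 0) :=
    opNormA_eq_opNormA_AA_blk (Rs := Ps + Qs) hA hblk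
      (by rw [comp_add, map_add, add_comp, hPs, hQs])
      fun x => by rw [add_apply, vnormA_add_sq_eq_of_re_inner_eq_zero hA (horth x)]
  have hsub : opNormA A (P - Q) = opNormA (AA A) (blk P Q 0 0) :=
    opNormA_eq_opNormA_AA_blk (Rs := Ps - Qs) hA hblk
      (by rw [comp_sub, map_sub, sub_comp, hPs, hQs])
      fun x => by rw [sub_apply, vnormA_sub_sq_eq_of_re_inner_eq_zero hA (horth x)]
  have hAA := isPositive_AA hA
  have hT : ABounded (AA A) (blk P Q 0 0) := aBounded_of_comp_eq_adjoint_comp hAA hblk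
  rw [hadd, hsub, max_self, min_self]
  exact ⟨by linarith [opNormA_le_two_mul_wA hAA hT], wA_le_opNormA hAA hT⟩
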